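/- Let R be a finite reduced crystallographic root system with base B, Weyl group W, length function ℓ, and let ρ be the half-sum of the positive roots. If w ∈ W has ℓ(w) = 2, then ρ − w(ρ) is not a root. -/

import Mathlib

/-!
If `ℓ(w) = 2` then `w = s_a s_b` for distinct simple roots `a, b`. Since `s_b` permutes the
positive roots other than `b` and negates `b`, `s_b ρ = ρ - b`; hence `ρ - w ρ = a + s_a b`. If this
were a root, so would be its image `b - a` under `s_a`; but `b - a` has coefficients of both signs
in the base, and every root is a nonnegative or a nonpositive combination of the base.
-/

open scoped RealInnerProductSpace

variable {V : Type*} [NormedAddCommGroup V] [InnerProductSpace ℝ V]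

/-- The reflection in the hyperplane orthogonal to `α`:
`x ↦ x - (2⟪α, x⟫/⟪α, α⟫) α`. -/
noncomputable def reflVec (α x : V) : V :=
  x - ((2 * ⟪α, x⟫) / ⟪α, α⟫) • α

/-- `v` is a linear combination of the elements of `B` with nonnegative
coefficients. -/
def IsNonnegComb (B : Finset V) (v : V) : Prop :=
  ∃ c : V → ℝ, (∀ α, 0 ≤ c α) ∧ v = ∑ α ∈ B, c α • α

/-- A finite reduced crystallographic root system `R` in a Euclidean space `V`,
together with a base (system of simple roots) `B` and the simple reflections
`s α` (realized as linear automorphisms of `V`). -/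
structure RootSystemData (V : Type*) [NormedAddCommGroup V]
    [InnerProductSpace ℝ V] where
  /-- the (finite) set of roots -/
  R : Finset V
  /-- the base (system of simple roots) -/
  B : Finset V
  /-- the reflections: `s α` is the reflection in the hyperplane orthogonal
  to `α` (see `s_apply`) -/
  s : V → (V ≃ₗ[ℝ] V)
  zero_not_mem : (0 : V) ∉ R
  base_subset : B ⊆ R
  base_indep : LinearIndependent ℝ (fun b : {x // x ∈ B} => (b : V))
  /-- reduced: the only multiples of a root `α` that are roots are `±α` -/
  reduced : ∀ α ∈ R, ∀ c : ℝ, c • α ∈ R → c = 1 ∨ c = -1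
  /-- crystallographic: `⟨β, α∨⟩ = 2⟪α, β⟫/⟪α, α⟫` is an integer -/
  crystallographic : ∀ α ∈ R, ∀ β ∈ R, ∃ n : ℤ, 2 * ⟪α, β⟫ = (n : ℝ) * ⟪α, α⟫
  /-- `R` is stable under the reflections in its elements -/
  reflection_mem : ∀ α ∈ R, ∀ β ∈ R, reflVec α β ∈ R
  /-- `s α` is the reflection in the hyperplane orthogonal to `α` -/
  s_apply : ∀ α ∈ R, ∀ x : V, s α x = reflVec α x
  /-- every root is a nonnegative or a nonpositive combination of the base -/
  pos_or_neg : ∀ β ∈ R, IsNonnegComb B β ∨ IsNonnegComb B (-β)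

/-- The positive roots: the roots which are nonnegative combinations of the
base. -/
noncomputable def posRoots (P : RootSystemData V) : Finset V :=
  @Finset.filter V (fun v => IsNonnegComb P.B v) (Classical.decPred _) P.R

/-- The set of simple reflections. -/
def simples (P : RootSystemData V) : Set (V ≃ₗ[ℝ] V) :=
  P.s '' (P.B : Set V)

/-- The Weyl group: the subgroup of `GL(V)` generated by the simple
reflections. -/
def weylGroup (P : RootSystemData V) : Subgroup (V ≃ₗ[ℝ] V) :=
  Subgroup.closure (simples P)

/-- The length of `w` with respect to a generating set `S`: the least number of
factors in an expression of `w` as a product of elements of `S`. -/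
noncomputable def lengthIn {G : Type*} [Group G] (S : Set G) (w : G) : ℕ :=
  sInf {n | ∃ l : List G, l.length = n ∧ (∀ x ∈ l, x ∈ S) ∧ l.prod = w}

/-- The Dynkin diagram on a set `I` of simple roots: vertices are the elements
of `I`, with an edge between two distinct roots exactly when they are not
orthogonal. -/
def dynkinOn (I : Finset V) : SimpleGraph {x // x ∈ I} where
  Adj a b := a ≠ b ∧ ⟪(a : V), (b : V)⟫ ≠ 0
  symm := by
    constructor
    intro a b h
    refine ⟨h.1.symm, ?_⟩
    rw [real_inner_comm]
    exact h.2
  loopless := by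
    constructor
    intro a h
    exact h.1 rfl

/-- `ρ`, the half-sum of the positive roots. -/
noncomputable def halfSumPos (P : RootSystemData V) : V :=
  (2⁻¹ : ℝ) • ∑ β ∈ posRoots P, β

theorem reflVec_self {α : V} (hα : α ≠ 0) : reflVec α α = -α := by
  have h2 : (2 * ⟪α, α⟫) / ⟪α, α⟫ = 2 := by field_simp [inner_self_ne_zero (𝕜 := ℝ) |>.mpr hα]
  rw [reflVec, h2]
  module

theorem reflVec_reflVec {α : V} (hα : α ≠ 0) (x : V) : reflVec α (reflVec α x) = x := by
  have hα' := inner_self_ne_zero (𝕜 := ℝ) |>.mpr hα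
  rw [reflVec, reflVec, inner_sub_right, real_inner_smul_right]
  match_scalars
  · ring
  · field_simp
    ring

theorem Finset.sum_pi_single_smul {ι R M : Type*} [DecidableEq ι] [Semiring R] [AddCommMonoid M]
    [Module R M] {s : Finset ι} {i : ι} (hi : i ∈ s) (t : R) (f : ι → M) :
    ∑ j ∈ s, (Pi.single i t : ι → R) j • f j = t • f i := by
  simp [Pi.single_apply, ite_smul, hi]

namespace RootSystemData

variable (P : RootSystemData V)

theorem ne_zero_of_mem {α : V} (hα : α ∈ P.R) : α ≠ 0 :=
  ne_of_mem_of_not_mem hα P.zero_not_mem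

theorem s_self {α : V} (hα : α ∈ P.R) : P.s α α = -α := by
  rw [P.s_apply α hα, reflVec_self (P.ne_zero_of_mem hα)]

theorem s_s {α : V} (hα : α ∈ P.R) (x : V) : P.s α (P.s α x) = x := by
  rw [P.s_apply α hα, P.s_apply α hα, reflVec_reflVec (P.ne_zero_of_mem hα)]

theorem s_mul_self {α : V} (hα : α ∈ P.R) : P.s α * P.s α = 1 :=
  LinearEquiv.ext (P.s_s hα)

theorem s_mem {α β : V} (hα : α ∈ P.R) (hβ : β ∈ P.R) : P.s α β ∈ P.R := by
  rw [P.s_apply α hα]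
  exact P.reflection_mem α hα β hβ

theorem coeff_eq_of_sum_smul_eq {c d : V → ℝ}
    (h : ∑ α ∈ P.B, c α • α = ∑ α ∈ P.B, d α • α) {α : V} (hα : α ∈ P.B) : c α = d α :=
  (linearIndepOn_finset_iffₛ (v := id) (s := P.B)).mp P.base_indep c d h α hα

theorem coeff_nonneg_of_isNonnegComb {v : V} (hv : IsNonnegComb P.B v) {e : V → ℝ}
    (he : v = ∑ α ∈ P.B, e α • α) {α : V} (hα : α ∈ P.B) : 0 ≤ e α := by
  obtain ⟨c, hc, rfl⟩ := hv
  rw [← P.coeff_eq_of_sum_smul_eq he hα]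
  exact hc α

theorem isNonnegComb_of_coeff_pos {v : V} (hv : v ∈ P.R) {e : V → ℝ}
    (he : v = ∑ α ∈ P.B, e α • α) {α : V} (hα : α ∈ P.B) (hpos : 0 < e α) :
    IsNonnegComb P.B v := by
  refine (P.pos_or_neg v hv).resolve_right fun hneg => ?_
  have hneg_e : -v = ∑ β ∈ P.B, (-e) β • β := by simp [he, neg_smul]
  have := P.coeff_nonneg_of_isNonnegComb hneg hneg_e hα
  simp only [Pi.neg_apply, neg_nonneg] at this
  linarith

theorem sub_notMem_of_mem_base {a b : V} (ha : a ∈ P.B) (hb : b ∈ P.B) (hab : a ≠ b) :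
    b - a ∉ P.R := by
  classical
  intro hroot
  have he : b - a = ∑ α ∈ P.B, (Pi.single b 1 - Pi.single a 1 : V → ℝ) α • α := by
    simp [sub_smul, Finset.sum_sub_distrib, Finset.sum_pi_single_smul ha,
      Finset.sum_pi_single_smul hb]
  have hpos := P.isNonnegComb_of_coeff_pos hroot he hb (by simp [hab])
  have := P.coeff_nonneg_of_isNonnegComb hpos he ha
  norm_num [hab] at this

theorem mem_posRoots {γ : V} : γ ∈ posRoots P ↔ γ ∈ P.R ∧ IsNonnegComb P.B γ :=
  @Finset.mem_filter V _ (Classical.decPred _) P.R γ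

theorem mem_posRoots_of_mem_base {b : V} (hb : b ∈ P.B) : b ∈ posRoots P := by
  classical
  refine P.mem_posRoots.mpr ⟨P.base_subset hb, Pi.single b 1, fun α => ?_, ?_⟩
  · exact (Pi.single_nonneg.mpr zero_le_one : (0 : V → ℝ) ≤ Pi.single b 1) α
  · rw [Finset.sum_pi_single_smul hb, one_smul]

theorem exists_coeff_pos_of_ne {b : V} (hb : b ∈ P.B) {γ : V} (hγ : γ ∈ P.R) {c : V → ℝ}
    (hc : ∀ α, 0 ≤ c α) (hsum : γ = ∑ α ∈ P.B, c α • α) (hne : γ ≠ b) :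
    ∃ α ∈ P.B, α ≠ b ∧ 0 < c α := by
  by_contra! hno
  have hγb : γ = c b • b := by
    rw [hsum, Finset.sum_eq_single_of_mem b hb]
    intro α hα hαb
    rw [le_antisymm (hno α hα hαb) (hc α), zero_smul]
  rcases P.reduced b (P.base_subset hb) (c b) (hγb ▸ hγ) with h | h
  · exact hne (by rw [hγb, h, one_smul])
  · linarith [hc b]

theorem reflVec_mem_posRoots {b : V} (hb : b ∈ P.B) {γ : V} (hγ : γ ∈ posRoots P)
    (hne : γ ≠ b) : reflVec b γ ∈ posRoots P ∧ reflVec b γ ≠ b := by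
  classical
  obtain ⟨hγR, c, hc, hsum⟩ := P.mem_posRoots.mp hγ
  obtain ⟨α₀, hα₀, hα₀b, hpos⟩ := P.exists_coeff_pos_of_ne hb hγR hc hsum hne
  have hreflR := P.reflection_mem b (P.base_subset hb) γ hγR
  set e : V → ℝ := c - Pi.single b ((2 * ⟪b, γ⟫) / ⟪b, b⟫)
  have hrefl : reflVec b γ = ∑ α ∈ P.B, e α • α := by
    simp only [e, Pi.sub_apply, sub_smul, Finset.sum_sub_distrib, Finset.sum_pi_single_smul hb,
      ← hsum]
    rfl
  have hcoeff : 0 < e α₀ := by simpa [e, hα₀b] using hpos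
  refine ⟨P.mem_posRoots.mpr ⟨hreflR, P.isNonnegComb_of_coeff_pos hreflR hrefl hα₀ hcoeff⟩,
    fun hb_eq => ?_⟩
  have hb_sum : ∑ α ∈ P.B, e α • α =
      ∑ α ∈ P.B, (Pi.single b 1 : V → ℝ) α • α := by
    rw [← hrefl, hb_eq, Finset.sum_pi_single_smul hb, one_smul]
  have := P.coeff_eq_of_sum_smul_eq hb_sum hα₀
  exact hcoeff.ne' (by simpa [hα₀b] using this)

theorem s_halfSumPos {b : V} (hb : b ∈ P.B) : P.s b (halfSumPos P) = halfSumPos P - b := by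
  classical
  have hbR := P.base_subset hb
  have hbpos := P.mem_posRoots_of_mem_base hb
  have hmaps : ∀ γ ∈ (posRoots P).erase b, reflVec b γ ∈ (posRoots P).erase b := by
    intro γ hγ
    obtain ⟨hne, hγ⟩ := Finset.mem_erase.mp hγ
    exact Finset.mem_erase.mpr (P.reflVec_mem_posRoots hb hγ hne).symm
  have hinv := reflVec_reflVec (P.ne_zero_of_mem hbR)
  have hperm : ∑ γ ∈ (posRoots P).erase b, reflVec b γ = ∑ γ ∈ (posRoots P).erase b, γ :=
    Finset.sum_nbij' _ _ hmaps hmaps (fun γ _ => hinv γ) (fun γ _ => hinv γ) fun _ _ => rfl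
  have hsum : ∑ γ ∈ posRoots P, P.s b γ = ∑ γ ∈ posRoots P, γ - (2 : ℝ) • b := by
    rw [← Finset.sum_erase_add _ _ hbpos, ← Finset.sum_erase_add _ (fun γ => γ) hbpos,
      P.s_self hbR, Finset.sum_congr rfl fun γ _ => P.s_apply b hbR γ, hperm]
    module
  rw [halfSumPos, map_smul, map_sum, hsum]
  module

end RootSystemData

theorem lengthIn_one {G : Type*} [Group G] (S : Set G) : lengthIn S 1 = 0 :=
  Nat.sInf_eq_zero.mpr (Or.inl ⟨[], rfl, by simp, rfl⟩)

theorem exists_mul_eq_of_lengthIn_eq_two {G : Type*} [Group G] {S : Set G} {w : G}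
    (h : lengthIn S w = 2) : ∃ x ∈ S, ∃ y ∈ S, x * y = w := by
  obtain ⟨l, hl, hS, rfl⟩ := Nat.sInf_mem (Nat.nonempty_of_sInf_eq_succ h)
  replace hl : l.length = 2 := hl.trans h
  obtain ⟨x, y, rfl⟩ := List.length_eq_two.mp hl
  exact ⟨x, hS x (by simp), y, hS y (by simp), by simp⟩

theorem rho_sub_w_rho_not_root_general {V : Type*} [NormedAddCommGroup V]
    [InnerProductSpace ℝ V] (P : RootSystemData V)
    (w : V ≃ₗ[ℝ] V)
    (hlen : lengthIn (simples P) w = 2) :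
    halfSumPos P - w (halfSumPos P) ∉ P.R := by
  obtain ⟨_, ⟨a, ha, rfl⟩, _, ⟨b, hb, rfl⟩, rfl⟩ := exists_mul_eq_of_lengthIn_eq_two hlen
  have haR := P.base_subset ha
  have hab : a ≠ b := by
    rintro rfl
    rw [P.s_mul_self haR, lengthIn_one] at hlen
    exact absurd hlen (by norm_num)
  have hw : halfSumPos P - (P.s a * P.s b) (halfSumPos P) = a + P.s a b := by
    rw [LinearEquiv.mul_apply, P.s_halfSumPos hb, map_sub, P.s_halfSumPos ha]
    abel
  intro hroot
  rw [hw] at hroot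
  have hba : P.s a (a + P.s a b) = b - a := by
    rw [map_add, P.s_self haR, P.s_s haR]
    abel
  exact P.sub_notMem_of_mem_base ha hb hab (hba ▸ P.s_mem haR hroot)

/-- Let `R` be a finite reduced crystallographic root system with
base `B`, Weyl group `W`, length function `ℓ`, and `ρ` the half-sum of the
positive roots. If `w ∈ W` has `ℓ(w) = 2`, then `ρ - w(ρ)` is not a root. -/
theorem rho_sub_w_rho_not_root {V : Type*} [NormedAddCommGroup V]
    [InnerProductSpace ℝ V] (P : RootSystemData V)
    (w : V ≃ₗ[ℝ] V) (hw : w ∈ weylGroup P)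
    (hlen : lengthIn (simples P) w = 2) :
    halfSumPos P - w (halfSumPos P) ∉ P.R :=
  rho_sub_w_rho_not_root_general P w hlen
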